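/- For all positive reals ε' and δ there exists ε = ε(ε', δ) > 0 such that the following holds. Let (V₁, V₂, V₃) be an ε-typical (ε, p)-regular triple with minimum density at least δp, and assume that the endpoints of every edge between V₂ and V₃ have at most 4p²|V₁| common neighbours in V₁. Then V₁ contains at most ε'|V₁| vertices that are not ε'-good. -/

import Mathlib

open Finset

open scoped Classical

noncomputable section

namespace RandomTriangle

/-- Number of ordered adjacent pairs between `X` and `Y`. -/
def eBtw {V : Type*} (G : SimpleGraph V) (X Y : Finset V) : ℕ :=
  ((X ×ˢ Y).filter fun a => G.Adj a.1 a.2).card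

/-- Edge density between `X` and `Y`. -/
def dens {V : Type*} (G : SimpleGraph V) (X Y : Finset V) : ℝ :=
  (eBtw G X Y : ℝ) / ((X.card : ℝ) * (Y.card : ℝ))

/-- Number of neighbours of `v` in `X`. -/
def degIn {V : Type*} (G : SimpleGraph V) (v : V) (X : Finset V) : ℕ :=
  (X.filter fun w => G.Adj v w).card

/-- Neighbourhood of `v` inside `X`. -/
def nbhdIn {V : Type*} (G : SimpleGraph V) (v : V) (X : Finset V) : Finset V :=
  X.filter fun w => G.Adj v w

/-- Number of common neighbours of `u` and `w` inside `X`. -/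
def codegIn {V : Type*} (G : SimpleGraph V) (u w : V) (X : Finset V) : ℕ :=
  (X.filter fun x => G.Adj u x ∧ G.Adj w x).card

/-- `(ε, p)`-regular pair `(X, Y)`. -/
def RegularPair {V : Type*} (G : SimpleGraph V) (ε p : ℝ) (X Y : Finset V) : Prop :=
  ∀ X' ⊆ X, ∀ Y' ⊆ Y, ε * X.card ≤ (X'.card : ℝ) → ε * Y.card ≤ (Y'.card : ℝ) →
    |dens G X Y - dens G X' Y'| ≤ ε * p

/-- `(ε, p)`-regular triple. -/
def RegularTriple {V : Type*} (G : SimpleGraph V) (ε p : ℝ) (V₁ V₂ V₃ : Finset V) : Prop :=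
  RegularPair G ε p V₁ V₂ ∧ RegularPair G ε p V₁ V₃ ∧ RegularPair G ε p V₂ V₃

/-- `v ∈ V₁` is an `ε`-typical vertex of the triple `(V₁, V₂, V₃)`:
its neighbourhoods in `V₂`, `V₃` have the expected size `(1 ± ε)·d₁ᵢp|Vᵢ|`
(note `d₁ᵢ p = dens G V₁ Vᵢ`), and they contain large subsets forming an
`(ε, p)`-regular pair of density `(1 ± ε)·d₂₃p`. -/
def TypicalVertex {V : Type*} (G : SimpleGraph V) (ε p : ℝ) (V₁ V₂ V₃ : Finset V) (v : V) :
    Prop :=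
  ((1 - ε) * (dens G V₁ V₂ * V₂.card) ≤ ((nbhdIn G v V₂).card : ℝ) ∧
    ((nbhdIn G v V₂).card : ℝ) ≤ (1 + ε) * (dens G V₁ V₂ * V₂.card)) ∧
  ((1 - ε) * (dens G V₁ V₃ * V₃.card) ≤ ((nbhdIn G v V₃).card : ℝ) ∧
    ((nbhdIn G v V₃).card : ℝ) ≤ (1 + ε) * (dens G V₁ V₃ * V₃.card)) ∧
  ∃ N₂' ⊆ nbhdIn G v V₂, ∃ N₃' ⊆ nbhdIn G v V₃,
    (1 - ε) * ((nbhdIn G v V₂).card : ℝ) ≤ (N₂'.card : ℝ) ∧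
    (1 - ε) * ((nbhdIn G v V₃).card : ℝ) ≤ (N₃'.card : ℝ) ∧
    RegularPair G ε p N₂' N₃' ∧
    (1 - ε) * dens G V₂ V₃ ≤ dens G N₂' N₃' ∧
    dens G N₂' N₃' ≤ (1 + ε) * dens G V₂ V₃

/-- An `ε`-typical triple: `(ε,p)`-regular and in each part all but at most an
`ε`-fraction of the vertices are `ε`-typical. -/
def TypicalTriple {V : Type*} (G : SimpleGraph V) (ε p : ℝ) (V₁ V₂ V₃ : Finset V) : Prop :=
  RegularTriple G ε p V₁ V₂ V₃ ∧
  ((V₁.filter fun v => ¬ TypicalVertex G ε p V₁ V₂ V₃ v).card : ℝ) ≤ ε * V₁.card ∧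
  ((V₂.filter fun v => ¬ TypicalVertex G ε p V₂ V₁ V₃ v).card : ℝ) ≤ ε * V₂.card ∧
  ((V₃.filter fun v => ¬ TypicalVertex G ε p V₃ V₁ V₂ v).card : ℝ) ≤ ε * V₃.card

/-- A `(δ, ε, p)`-super-regular triple. -/
def SuperRegularTriple {V : Type*} (G : SimpleGraph V) (δ ε p : ℝ) (V₁ V₂ V₃ : Finset V) :
    Prop :=
  RegularTriple G ε p V₁ V₂ V₃ ∧
  δ * p ≤ dens G V₁ V₂ ∧ δ * p ≤ dens G V₁ V₃ ∧ δ * p ≤ dens G V₂ V₃ ∧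
  (∀ v ∈ V₁, TypicalVertex G ε p V₁ V₂ V₃ v) ∧
  (∀ v ∈ V₂, TypicalVertex G ε p V₂ V₁ V₃ v) ∧
  (∀ v ∈ V₃, TypicalVertex G ε p V₃ V₁ V₂ v)

/-- An edge `(u, w)` with `u ∈ V₂`, `w ∈ V₃` is `ε`-good (w.r.t. `V₁`) if its endpoints
have at least `(1 - ε)·d₁₂d₁₃p²|V₁|` common neighbours in `V₁`
(note `d₁₂d₁₃p² = dens G V₁ V₂ * dens G V₁ V₃`). -/
def GoodEdge {V : Type*} (G : SimpleGraph V) (ε : ℝ) (V₁ V₂ V₃ : Finset V) (u w : V) : Prop :=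
  (1 - ε) * (dens G V₁ V₂ * dens G V₁ V₃ * V₁.card) ≤ (codegIn G u w V₁ : ℝ)

/-- An `ε`-typical vertex `v ∈ V₁` is `ε`-good if the pair of its neighbourhoods in
`V₂`, `V₃` spans at most `ε·d₁₂d₁₃d₂₃p³|V₂||V₃|` edges that are not `ε`-good. -/
def GoodVertex {V : Type*} (G : SimpleGraph V) (ε p : ℝ) (V₁ V₂ V₃ : Finset V) (v : V) :
    Prop :=
  TypicalVertex G ε p V₁ V₂ V₃ v ∧
  ((((nbhdIn G v V₂) ×ˢ (nbhdIn G v V₃)).filter fun uw =>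
      G.Adj uw.1 uw.2 ∧ ¬ GoodEdge G ε V₁ V₂ V₃ uw.1 uw.2).card : ℝ) ≤
    ε * (dens G V₁ V₂ * dens G V₁ V₃ * dens G V₂ V₃ * V₂.card * V₃.card)

/-- A `(δ, ε, p)`-strong-super-regular triple. -/
def StrongSuperRegularTriple {V : Type*} (G : SimpleGraph V) (δ ε p : ℝ)
    (V₁ V₂ V₃ : Finset V) : Prop :=
  SuperRegularTriple G δ ε p V₁ V₂ V₃ ∧
  (∀ v ∈ V₁, GoodVertex G ε p V₁ V₂ V₃ v) ∧
  (∀ v ∈ V₂, GoodVertex G ε p V₂ V₁ V₃ v) ∧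
  (∀ v ∈ V₃, GoodVertex G ε p V₃ V₁ V₂ v)

/-- A triangle packing: a collection of pairwise vertex-disjoint triangles of `G`. -/
def IsTrianglePacking {V : Type*} [DecidableEq V] (G : SimpleGraph V)
    (T : Finset (Finset V)) : Prop :=
  (∀ t ∈ T, t.card = 3 ∧ ∀ x ∈ t, ∀ y ∈ t, x ≠ y → G.Adj x y) ∧
  (∀ s ∈ T, ∀ t ∈ T, s ≠ t → Disjoint s t)

def idx0 {k : ℕ} (t : Fin k) : Fin (3 * k) := ⟨3 * t.1, by have := t.2; omega⟩
def idx1 {k : ℕ} (t : Fin k) : Fin (3 * k) := ⟨3 * t.1 + 1, by have := t.2; omega⟩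
def idx2 {k : ℕ} (t : Fin k) : Fin (3 * k) := ⟨3 * t.1 + 2, by have := t.2; omega⟩

/-- The endpoints of every edge between `A` and `B` have at most `4|C|p²` common
neighbours in `C`. -/
def CodegBound {V : Type*} (G : SimpleGraph V) (p : ℝ) (A B C : Finset V) : Prop :=
  ∀ u ∈ A, ∀ w ∈ B, G.Adj u w → (codegIn G u w C : ℝ) ≤ 4 * C.card * p ^ 2

/-- The probability, in the Erdős–Rényi random graph `G(n, p)`, of the event `A`. -/
def gnpProb (n : ℕ) (p : ℝ) (A : Set (SimpleGraph (Fin n))) : ℝ :=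
  ∑ G ∈ Finset.univ.filter (fun G => G ∈ A),
    p ^ ((Finset.univ.filter fun e : Sym2 (Fin n) => e ∈ G.edgeSet).card) *
      (1 - p) ^ (n.choose 2 - (Finset.univ.filter fun e : Sym2 (Fin n) => e ∈ G.edgeSet).card)

/-- A sequence of graph properties holds asymptotically almost surely in `G(n, p n)`. -/
def AAS (p : ℕ → ℝ) (P : ∀ n : ℕ, SimpleGraph (Fin n) → Prop) : Prop :=
  Filter.Tendsto (fun n => gnpProb n (p n) {G | P n G}) Filter.atTop (nhds 1)

end RandomTriangle

open RandomTriangle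

/-!
Call an edge `uw` between `V₂` and `V₃` bad if `u` and `w` have fewer than
`(1 - ε')d₁₂d₁₃p²|V₁|` common neighbours in `V₁`. For a typical `u ∈ V₂`, a bad neighbour `w`
has few neighbours in the large set `N(u) ∩ V₁`, hence in the regular pair that the typicality of
`u` provides inside `N(u)`; regularity then allows at most `2ε|N(u) ∩ V₃|` such `w`. The same
holds for typical `w ∈ V₃`, and the edges between the at most `ε|V₂|` and `ε|V₃|` atypical
vertices are controlled by the regularity of `(V₂, V₃)`. Hence there are `O(ε)·e(V₂, V₃)` bad
edges. Double counting pairs (vertex of `V₁`, bad edge in its neighbourhood), the codegree bound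
gives a total of `O(ε p²|V₁|)·e(V₂, V₃)`, while every typical vertex that is not good contributes
more than `ε'd₁₂d₁₃p²·e(V₂, V₃) ≥ ε'δ²p²·e(V₂, V₃)`.
-/

namespace RandomTriangle

variable {V : Type*} {G : SimpleGraph V}

lemma eBtw_eq_card_interedges (X Y : Finset V) : eBtw G X Y = #(G.interedges X Y) := rfl

lemma dens_eq_edgeDensity (X Y : Finset V) : dens G X Y = G.edgeDensity X Y := by
  rw [dens, SimpleGraph.edgeDensity_def, eBtw_eq_card_interedges]; push_cast; rfl

lemma dens_nonneg (X Y : Finset V) : 0 ≤ dens G X Y := by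
  rw [dens_eq_edgeDensity]; exact_mod_cast G.edgeDensity_nonneg X Y

lemma dens_comm (X Y : Finset V) : dens G X Y = dens G Y X := by
  rw [dens_eq_edgeDensity, dens_eq_edgeDensity, G.edgeDensity_comm]

lemma eBtw_mono {X X' Y Y' : Finset V} (hX : X ⊆ X') (hY : Y ⊆ Y') :
    eBtw G X Y ≤ eBtw G X' Y' :=
  card_le_card (G.interedges_mono hX hY)

lemma eBtw_eq_dens_mul (X Y : Finset V) : (eBtw G X Y : ℝ) = dens G X Y * (#X * #Y) := by
  rcases X.eq_empty_or_nonempty with rfl | hX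
  · simp [eBtw]
  rcases Y.eq_empty_or_nonempty with rfl | hY
  · simp [eBtw]
  rw [dens, div_mul_cancel₀ _ (by positivity)]

lemma eBtw_eq_sum_degIn_left (X Y : Finset V) : eBtw G X Y = ∑ x ∈ X, #(nbhdIn G x Y) := by
  simp only [eBtw, nbhdIn, card_filter, sum_product]

lemma eBtw_eq_sum_degIn_right (X Y : Finset V) : eBtw G X Y = ∑ y ∈ Y, #(nbhdIn G y X) := by
  simp only [eBtw, nbhdIn, card_filter, sum_product_right, G.adj_comm]

lemma codegIn_comm (u w : V) (X : Finset V) : codegIn G u w X = codegIn G w u X := by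
  simp only [codegIn, and_comm]

lemma card_pos_of_dens_pos {X Y : Finset V} (h : 0 < dens G X Y) : 0 < #X ∧ 0 < #Y := by
  rw [card_pos, card_pos]
  by_contra! hXY
  rcases X.eq_empty_or_nonempty with rfl | hX
  · simp [dens] at h
  · simp [dens, hXY hX] at h

lemma RegularPair.mono {ε ε' p : ℝ} {X Y : Finset V} (h : RegularPair G ε p X Y) (hεε' : ε ≤ ε')
    (hp : 0 ≤ p) : RegularPair G ε' p X Y := fun X' hX' Y' hY' hX'c hY'c =>
  (h X' hX' Y' hY' (by nlinarith [(#X).cast_nonneg (α := ℝ)])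
    (by nlinarith [(#Y).cast_nonneg (α := ℝ)])).trans (by nlinarith)

lemma RegularPair.card_le_of_degree_lt {ε p : ℝ} {X Y W : Finset V} (h : RegularPair G ε p X Y)
    (hε0 : 0 ≤ ε) (hε1 : ε ≤ 1) (hW : W ⊆ Y)
    (hdeg : ∀ w ∈ W, (#(nbhdIn G w X) : ℝ) < (dens G X Y - ε * p) * #X) :
    (#W : ℝ) ≤ ε * #Y := by
  by_contra! hlt
  have hWne : W.Nonempty := by
    rw [← card_pos]; exact_mod_cast (by positivity : (0 : ℝ) ≤ ε * #Y).trans_lt hlt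
  have hreg := h X subset_rfl W hW (mul_le_of_le_one_left (by positivity) hε1) hlt.le
  have hlow : dens G X Y - ε * p ≤ dens G X W := by linarith [(abs_le.1 hreg).2]
  have hupp : (eBtw G X W : ℝ) < (dens G X Y - ε * p) * (#X * #W) := by
    rw [eBtw_eq_sum_degIn_right]
    push_cast
    calc ∑ w ∈ W, (#(nbhdIn G w X) : ℝ) < ∑ _w ∈ W, (dens G X Y - ε * p) * #X :=
          sum_lt_sum_of_nonempty hWne hdeg
      _ = (dens G X Y - ε * p) * (#X * #W) := by rw [sum_const, nsmul_eq_mul]; ring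
  rw [eBtw_eq_dens_mul] at hupp
  nlinarith [mul_le_mul_of_nonneg_right hlow (by positivity : (0 : ℝ) ≤ #X * #W)]

lemma exists_superset_card_le_two_mul {ε : ℝ} {A X : Finset V} (hAX : A ⊆ X) (hA : A.Nonempty)
    (hε1 : ε ≤ 1) (hAc : (#A : ℝ) ≤ ε * #X) :
    ∃ A', A ⊆ A' ∧ A' ⊆ X ∧ ε * #X ≤ #A' ∧ (#A' : ℝ) ≤ 2 * ε * #X := by
  have hA1 : (1 : ℝ) ≤ #A := by exact_mod_cast hA.card_pos
  obtain ⟨A', hAA', hA'X, hA'c⟩ := exists_subsuperset_card_eq hAX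
    (Nat.cast_le.1 (hAc.trans (Nat.le_ceil _)) : #A ≤ ⌈ε * #X⌉₊)
    (Nat.ceil_le.2 (mul_le_of_le_one_left (by positivity) hε1))
  refine ⟨A', hAA', hA'X, hA'c ▸ Nat.le_ceil _, ?_⟩
  have := Nat.ceil_lt_add_one (by linarith : (0 : ℝ) ≤ ε * #X)
  rw [hA'c]
  linarith

lemma RegularPair.eBtw_le_of_card_le {ε p : ℝ} {X Y A B : Finset V} (h : RegularPair G ε p X Y)
    (hε1 : ε ≤ 1) (hεp : ε * p ≤ dens G X Y) (hAX : A ⊆ X) (hBY : B ⊆ Y)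
    (hAc : (#A : ℝ) ≤ ε * #X) (hBc : (#B : ℝ) ≤ ε * #Y) :
    (eBtw G A B : ℝ) ≤ 8 * ε ^ 2 * eBtw G X Y := by
  rcases A.eq_empty_or_nonempty with rfl | hA
  · simp only [eBtw, empty_product, filter_empty, card_empty, Nat.cast_zero]; positivity
  rcases B.eq_empty_or_nonempty with rfl | hB
  · simp only [eBtw, product_empty, filter_empty, card_empty, Nat.cast_zero]; positivity
  obtain ⟨A', hAA', hA'X, hA'lo, hA'hi⟩ := exists_superset_card_le_two_mul hAX hA hε1 hAc
  obtain ⟨B', hBB', hB'Y, hB'lo, hB'hi⟩ := exists_superset_card_le_two_mul hBY hB hε1 hBc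
  have hdens : dens G A' B' ≤ dens G X Y + ε * p := by
    linarith [(abs_le.1 (h A' hA'X B' hB'Y hA'lo hB'lo)).1]
  calc (eBtw G A B : ℝ) ≤ eBtw G A' B' := by
        exact_mod_cast eBtw_mono hAA' hBB'
    _ = dens G A' B' * (#A' * #B') := eBtw_eq_dens_mul _ _
    _ ≤ (dens G X Y + dens G X Y) * ((2 * ε * #X) * (2 * ε * #Y)) :=
        mul_le_mul (hdens.trans (by linarith))
          (mul_le_mul hA'hi hB'hi (Nat.cast_nonneg _) ((Nat.cast_nonneg _).trans hA'hi))
          (by positivity) (by linarith [dens_nonneg (G := G) X Y])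
    _ = 8 * ε ^ 2 * eBtw G X Y := by rw [eBtw_eq_dens_mul]; ring

lemma TypicalVertex.mono {ε ε' p : ℝ} {V₁ V₂ V₃ : Finset V} {v : V}
    (h : TypicalVertex G ε p V₁ V₂ V₃ v) (hεε' : ε ≤ ε') (hp : 0 ≤ p) :
    TypicalVertex G ε' p V₁ V₂ V₃ v := by
  obtain ⟨⟨h₂lo, h₂hi⟩, ⟨h₃lo, h₃hi⟩, N₂', hN₂', N₃', hN₃', hc₂, hc₃, hreg, hdlo, hdhi⟩ := h
  have := mul_nonneg (dens_nonneg (G := G) V₁ V₂) (#V₂).cast_nonneg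
  have := mul_nonneg (dens_nonneg (G := G) V₁ V₃) (#V₃).cast_nonneg
  have := dens_nonneg (G := G) V₂ V₃
  have := (#(nbhdIn G v V₂)).cast_nonneg (α := ℝ)
  have := (#(nbhdIn G v V₃)).cast_nonneg (α := ℝ)
  exact ⟨⟨by nlinarith, by nlinarith⟩, ⟨by nlinarith, by nlinarith⟩,
    N₂', hN₂', N₃', hN₃', by nlinarith, by nlinarith, hreg.mono hεε' hp, by nlinarith,
    by nlinarith⟩

lemma one_sub_mul_le_of_margin {ε e p δ d : ℝ} (hδ : 0 < δ) (hp : 0 ≤ p)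
    (hd : δ * p ≤ d) (hε0 : 0 ≤ ε) (hε1 : ε ≤ 1) (he : ε * (3 + δ⁻¹) ≤ e) :
    (1 - e) * d ≤ ((1 - ε) * d - ε * p) * (1 - ε) ^ 2 := by
  have hd0 : 0 ≤ d := (by positivity : 0 ≤ δ * p).trans hd
  have hpd : ε * p ≤ ε * δ⁻¹ * d := by
    rw [mul_assoc]; gcongr; rwa [le_inv_mul_iff₀ hδ]
  have hcube : 1 - 3 * ε ≤ (1 - ε) ^ 3 := by nlinarith [mul_nonneg (mul_nonneg hε0 hε0) hε0]
  have hsq : (1 - ε) ^ 2 ≤ 1 := by nlinarith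
  nlinarith [mul_le_mul_of_nonneg_right hcube hd0, mul_le_mul_of_nonneg_right he hd0,
    mul_le_mul_of_nonneg_left hsq (by positivity : 0 ≤ ε * p)]

lemma card_le_two_mul_of_card_inter_le {ε : ℝ} {W N N' : Finset V} (hε0 : 0 ≤ ε) (hW : W ⊆ N)
    (hN' : N' ⊆ N) (hN'c : (1 - ε) * #N ≤ #N') (hin : (#(W ∩ N') : ℝ) ≤ ε * #N') :
    (#W : ℝ) ≤ 2 * ε * #N := by
  have hN'le := card_le_card hN'
  have hout : (#(W \ N') : ℝ) ≤ #N - #N' := by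
    rw [← Nat.cast_sub hN'le, ← card_sdiff_of_subset hN']
    exact_mod_cast card_le_card (sdiff_subset_sdiff hW subset_rfl)
  rw [← card_inter_add_card_sdiff W N']
  push_cast
  nlinarith [(Nat.cast_le (α := ℝ)).2 hN'le]

lemma TypicalVertex.card_le_of_codegIn_lt {ε e p δ : ℝ} {Va Vb Vc W : Finset V} {x : V}
    (hx : TypicalVertex G ε p Vb Va Vc x) (hδ : 0 < δ) (hp : 0 ≤ p)
    (hdens : δ * p ≤ dens G Va Vc) (hε0 : 0 ≤ ε) (hε1 : ε ≤ 1) (he : ε * (3 + δ⁻¹) ≤ e)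
    (hW : W ⊆ nbhdIn G x Vc)
    (hcodeg : ∀ y ∈ W, (codegIn G x y Va : ℝ) < (1 - e) * (dens G Vb Va * dens G Va Vc * #Va)) :
    (#W : ℝ) ≤ 2 * ε * #(nbhdIn G x Vc) := by
  obtain ⟨⟨hNa, -⟩, -, Na', hNa', Nc', hNc', hNa'c, hNc'c, hreg, hdens', -⟩ := hx
  rcases W.eq_empty_or_nonempty with rfl | ⟨y₀, hy₀⟩
  · simp only [card_empty, Nat.cast_zero]; positivity
  set K := dens G Vb Va * #Va
  have hK : 0 ≤ K := mul_nonneg (dens_nonneg _ _) (Nat.cast_nonneg _)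
  set g := (1 - ε) * dens G Va Vc - ε * p
  have hgap : (1 - e) * dens G Va Vc ≤ g * (1 - ε) ^ 2 :=
    one_sub_mul_le_of_margin hδ hp hdens hε0 hε1 he
  have hthreshold_eq : (1 - e) * (dens G Vb Va * dens G Va Vc * #Va) =
      (1 - e) * dens G Va Vc * K := by ring
  have hg : 0 < g := by
    have hpos := (Nat.cast_nonneg _).trans_lt (hcodeg y₀ hy₀)
    rw [hthreshold_eq] at hpos
    by_contra! hg
    nlinarith [mul_le_mul_of_nonneg_right hgap hK, mul_nonneg (sq_nonneg (1 - ε)) hK]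
  have hNa'big : (1 - ε) ^ 2 * K ≤ #Na' := by nlinarith
  have hthreshold : (1 - e) * (dens G Vb Va * dens G Va Vc * #Va) ≤
      (dens G Na' Nc' - ε * p) * #Na' :=
    calc (1 - e) * (dens G Vb Va * dens G Va Vc * #Va) = (1 - e) * dens G Va Vc * K :=
          hthreshold_eq
      _ ≤ g * (1 - ε) ^ 2 * K := mul_le_mul_of_nonneg_right hgap hK
      _ ≤ g * #Na' := by rw [mul_assoc]; exact mul_le_mul_of_nonneg_left hNa'big hg.le
      _ ≤ (dens G Na' Nc' - ε * p) * #Na' := by gcongr; linarith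
  refine card_le_two_mul_of_card_inter_le hε0 hW hNc' hNc'c
    (hreg.card_le_of_degree_lt hε0 hε1 inter_subset_right fun y hy => ?_)
  refine lt_of_le_of_lt ?_ ((hcodeg y (mem_inter.1 hy).1).trans_le hthreshold)
  refine Nat.cast_le.2 (card_le_card fun z hz => ?_)
  obtain ⟨hzNa', hyz⟩ := mem_filter.1 hz
  obtain ⟨hzVa, hxz⟩ := mem_filter.1 (hNa' hzNa')
  exact mem_filter.2 ⟨hzVa, hxz, hyz⟩

lemma card_filter_adj_le_mul_eBtw_of_left {X Y : Finset V} {Q : V → V → Prop}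
    [∀ x y, Decidable (Q x y)] {c : ℝ}
    (h : ∀ x ∈ X, (#{y ∈ nbhdIn G x Y | Q x y} : ℝ) ≤ c * #(nbhdIn G x Y)) :
    (#{a ∈ X ×ˢ Y | G.Adj a.1 a.2 ∧ Q a.1 a.2} : ℝ) ≤ c * eBtw G X Y := by
  have hfib : #{a ∈ X ×ˢ Y | G.Adj a.1 a.2 ∧ Q a.1 a.2} =
      ∑ x ∈ X, #{y ∈ nbhdIn G x Y | Q x y} := by
    simp only [card_filter, sum_product, nbhdIn, sum_filter, ite_and]
  rw [hfib, eBtw_eq_sum_degIn_left, Nat.cast_sum, Nat.cast_sum, mul_sum]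
  exact sum_le_sum h

lemma card_filter_adj_le_mul_eBtw_of_right {X Y : Finset V} {Q : V → V → Prop}
    [∀ x y, Decidable (Q x y)] {c : ℝ}
    (h : ∀ y ∈ Y, (#{x ∈ nbhdIn G y X | Q x y} : ℝ) ≤ c * #(nbhdIn G y X)) :
    (#{a ∈ X ×ˢ Y | G.Adj a.1 a.2 ∧ Q a.1 a.2} : ℝ) ≤ c * eBtw G X Y := by
  have hfib : #{a ∈ X ×ˢ Y | G.Adj a.1 a.2 ∧ Q a.1 a.2} =
      ∑ y ∈ Y, #{x ∈ nbhdIn G y X | Q x y} := by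
    simp only [card_filter, sum_product_right, nbhdIn, sum_filter, ite_and, G.adj_comm]
  rw [hfib, eBtw_eq_sum_degIn_right, Nat.cast_sum, Nat.cast_sum, mul_sum]
  exact sum_le_sum h

lemma sum_card_filter_nbhdIn_product (X Y Z : Finset V) (Q : V → V → Prop)
    [∀ x y, Decidable (Q x y)] :
    ∑ v ∈ Z, #{a ∈ nbhdIn G v X ×ˢ nbhdIn G v Y | Q a.1 a.2} =
      ∑ a ∈ X ×ˢ Y with Q a.1 a.2, codegIn G a.1 a.2 Z := by
  have hfilter : ∀ v, {a ∈ nbhdIn G v X ×ˢ nbhdIn G v Y | Q a.1 a.2} =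
      {a ∈ {a ∈ X ×ˢ Y | Q a.1 a.2} | G.Adj v a.1 ∧ G.Adj v a.2} := by
    intro v; ext a; simp only [nbhdIn, mem_filter, mem_product]; tauto
  simp only [hfilter, codegIn, card_filter]
  rw [sum_comm]
  simp only [G.adj_comm]

variable (G) in
def badEdges (e : ℝ) (V₁ V₂ V₃ : Finset V) : Finset (V × V) :=
  {a ∈ V₂ ×ˢ V₃ | G.Adj a.1 a.2 ∧ ¬ GoodEdge G e V₁ V₂ V₃ a.1 a.2}

lemma card_badEdges_filter_typical_left_le {ε e p δ : ℝ} {V₁ V₂ V₃ : Finset V} (hδ : 0 < δ)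
    (hp : 0 ≤ p) (h₁₃ : δ * p ≤ dens G V₁ V₃) (hε0 : 0 ≤ ε) (hε1 : ε ≤ 1)
    (he : ε * (3 + δ⁻¹) ≤ e) :
    (#{a ∈ {u ∈ V₂ | TypicalVertex G ε p V₂ V₁ V₃ u} ×ˢ V₃ |
        G.Adj a.1 a.2 ∧ ¬ GoodEdge G e V₁ V₂ V₃ a.1 a.2} : ℝ) ≤ 2 * ε * eBtw G V₂ V₃ := by
  refine (card_filter_adj_le_mul_eBtw_of_left (Q := fun u w => ¬ GoodEdge G e V₁ V₂ V₃ u w)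
    (c := 2 * ε) fun u hu => ?_).trans ?_
  · refine (mem_filter.1 hu).2.card_le_of_codegIn_lt hδ hp h₁₃ hε0 hε1 he
      (filter_subset _ _) fun w hw => ?_
    rw [dens_comm V₂ V₁]
    exact not_le.1 (mem_filter.1 hw).2
  · gcongr
    exact eBtw_mono (filter_subset _ _) subset_rfl

lemma card_badEdges_filter_typical_right_le {ε e p δ : ℝ} {V₁ V₂ V₃ : Finset V} (hδ : 0 < δ)
    (hp : 0 ≤ p) (h₁₂ : δ * p ≤ dens G V₁ V₂) (hε0 : 0 ≤ ε) (hε1 : ε ≤ 1)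
    (he : ε * (3 + δ⁻¹) ≤ e) :
    (#{a ∈ V₂ ×ˢ {w ∈ V₃ | TypicalVertex G ε p V₃ V₁ V₂ w} |
        G.Adj a.1 a.2 ∧ ¬ GoodEdge G e V₁ V₂ V₃ a.1 a.2} : ℝ) ≤ 2 * ε * eBtw G V₂ V₃ := by
  refine (card_filter_adj_le_mul_eBtw_of_right (Q := fun u w => ¬ GoodEdge G e V₁ V₂ V₃ u w)
    (c := 2 * ε) fun w hw => ?_).trans ?_
  · refine (mem_filter.1 hw).2.card_le_of_codegIn_lt hδ hp h₁₂ hε0 hε1 he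
      (filter_subset _ _) fun u hu => ?_
    rw [dens_comm V₃ V₁, codegIn_comm, mul_comm (dens G V₁ V₃)]
    exact not_le.1 (mem_filter.1 hu).2
  · gcongr
    exact eBtw_mono subset_rfl (filter_subset _ _)

lemma card_badEdges_le {ε e p δ : ℝ} {V₁ V₂ V₃ : Finset V} (hreg : RegularPair G ε p V₂ V₃)
    (hA₂ : (#{v ∈ V₂ | ¬ TypicalVertex G ε p V₂ V₁ V₃ v} : ℝ) ≤ ε * #V₂)
    (hA₃ : (#{v ∈ V₃ | ¬ TypicalVertex G ε p V₃ V₁ V₂ v} : ℝ) ≤ ε * #V₃)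
    (hδ : 0 < δ) (hp : 0 ≤ p) (h₁₂ : δ * p ≤ dens G V₁ V₂) (h₁₃ : δ * p ≤ dens G V₁ V₃)
    (h₂₃ : δ * p ≤ dens G V₂ V₃) (hε0 : 0 ≤ ε) (hε : ε ≤ 1 / 8) (hεδ : ε ≤ δ)
    (he : ε * (3 + δ⁻¹) ≤ e) :
    (#(badEdges G e V₁ V₂ V₃) : ℝ) ≤ 5 * ε * eBtw G V₂ V₃ := by
  set A₂ := {u ∈ V₂ | ¬ TypicalVertex G ε p V₂ V₁ V₃ u}
  set A₃ := {w ∈ V₃ | ¬ TypicalVertex G ε p V₃ V₁ V₂ w}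
  have hcover : badEdges G e V₁ V₂ V₃ ⊆
      {a ∈ {u ∈ V₂ | TypicalVertex G ε p V₂ V₁ V₃ u} ×ˢ V₃ |
        G.Adj a.1 a.2 ∧ ¬ GoodEdge G e V₁ V₂ V₃ a.1 a.2} ∪
      {a ∈ V₂ ×ˢ {w ∈ V₃ | TypicalVertex G ε p V₃ V₁ V₂ w} |
        G.Adj a.1 a.2 ∧ ¬ GoodEdge G e V₁ V₂ V₃ a.1 a.2} ∪
      G.interedges A₂ A₃ := by
    intro a ha
    simp only [badEdges, A₂, A₃, SimpleGraph.interedges_def, mem_union, mem_filter,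
      mem_product] at ha ⊢
    tauto
  have hleft := card_badEdges_filter_typical_left_le (G := G) (V₂ := V₂) hδ hp h₁₃ hε0
    (by linarith) he
  have hright := card_badEdges_filter_typical_right_le (G := G) (V₃ := V₃) hδ hp h₁₂ hε0
    (by linarith) he
  have hatypical : (eBtw G A₂ A₃ : ℝ) ≤ ε * eBtw G V₂ V₃ := by
    have := hreg.eBtw_le_of_card_le (A := A₂) (B := A₃) (by linarith) (by nlinarith)
      (filter_subset _ _) (filter_subset _ _) hA₂ hA₃
    nlinarith [(eBtw G V₂ V₃).cast_nonneg (α := ℝ)]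
  rw [eBtw_eq_card_interedges] at hatypical
  have hcard := (card_le_card hcover).trans
    ((card_union_le _ _).trans (Nat.add_le_add_right (card_union_le _ _) _))
  have hcard' : (#(badEdges G e V₁ V₂ V₃) : ℝ) ≤ _ := Nat.cast_le.2 hcard
  push_cast at hcard'
  linarith

lemma sum_card_badEdges_nbhdIn_le {ε e p : ℝ} {V₁ V₂ V₃ : Finset V}
    (hbad : (#(badEdges G e V₁ V₂ V₃) : ℝ) ≤ 5 * ε * eBtw G V₂ V₃)
    (hcodeg : ∀ u ∈ V₂, ∀ w ∈ V₃, G.Adj u w → (codegIn G u w V₁ : ℝ) ≤ 4 * p ^ 2 * #V₁) :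
    ∑ v ∈ V₁, (#{a ∈ nbhdIn G v V₂ ×ˢ nbhdIn G v V₃ |
        G.Adj a.1 a.2 ∧ ¬ GoodEdge G e V₁ V₂ V₃ a.1 a.2} : ℝ) ≤
      20 * ε * p ^ 2 * #V₁ * eBtw G V₂ V₃ := by
  rw [← Nat.cast_sum, sum_card_filter_nbhdIn_product (Q := fun u w =>
    G.Adj u w ∧ ¬ GoodEdge G e V₁ V₂ V₃ u w), Nat.cast_sum]
  calc ∑ a ∈ badEdges G e V₁ V₂ V₃, (codegIn G a.1 a.2 V₁ : ℝ)
      ≤ ∑ _a ∈ badEdges G e V₁ V₂ V₃, 4 * p ^ 2 * (#V₁ : ℝ) := sum_le_sum fun a ha => by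
        obtain ⟨ha, hadj, -⟩ := mem_filter.1 ha
        exact hcodeg a.1 (mem_product.1 ha).1 a.2 (mem_product.1 ha).2 hadj
    _ = #(badEdges G e V₁ V₂ V₃) * (4 * p ^ 2 * #V₁) := by rw [sum_const, nsmul_eq_mul]
    _ ≤ 5 * ε * eBtw G V₂ V₃ * (4 * p ^ 2 * #V₁) := by gcongr
    _ = 20 * ε * p ^ 2 * #V₁ * eBtw G V₂ V₃ := by ring

lemma card_filter_lt_mul_le_sum {α : Type*} (s : Finset α) (f : α → ℝ) (t : ℝ)
    (hf : ∀ a ∈ s, 0 ≤ f a) : #{a ∈ s | t < f a} * t ≤ ∑ a ∈ s, f a := by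
  rw [← nsmul_eq_mul]
  exact (card_nsmul_le_sum _ f t fun a ha => (mem_filter.1 ha).2.le).trans
    (sum_le_sum_of_subset_of_nonneg (filter_subset _ _) fun a ha _ => hf a ha)

lemma filter_not_goodVertex_subset {ε ε' p : ℝ} {V₁ V₂ V₃ : Finset V} (hεε' : ε ≤ ε')
    (hp : 0 ≤ p) :
    {v ∈ V₁ | ¬ GoodVertex G ε' p V₁ V₂ V₃ v} ⊆ {v ∈ V₁ | ¬ TypicalVertex G ε p V₁ V₂ V₃ v} ∪
      {v ∈ V₁ | ε' * (dens G V₁ V₂ * dens G V₁ V₃ * dens G V₂ V₃ * #V₂ * #V₃) <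
        #{a ∈ nbhdIn G v V₂ ×ˢ nbhdIn G v V₃ |
          G.Adj a.1 a.2 ∧ ¬ GoodEdge G ε' V₁ V₂ V₃ a.1 a.2}} := by
  intro v hv
  obtain ⟨hv, hgood⟩ := mem_filter.1 hv
  by_cases htyp : TypicalVertex G ε p V₁ V₂ V₃ v
  · exact mem_union_right _ (mem_filter.2 ⟨hv, not_le.1 fun h => hgood ⟨htyp.mono hεε' hp, h⟩⟩)
  · exact mem_union_left _ (mem_filter.2 ⟨hv, htyp⟩)

lemma card_not_goodVertex_le {ε ε' p δ : ℝ} {V₁ V₂ V₃ : Finset V}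
    (hT : TypicalTriple G ε p V₁ V₂ V₃) (hδ : 0 < δ) (hp : 0 < p)
    (h₁₂ : δ * p ≤ dens G V₁ V₂) (h₁₃ : δ * p ≤ dens G V₁ V₃) (h₂₃ : δ * p ≤ dens G V₂ V₃)
    (hcodeg : ∀ u ∈ V₂, ∀ w ∈ V₃, G.Adj u w → (codegIn G u w V₁ : ℝ) ≤ 4 * p ^ 2 * #V₁)
    (hε' : 0 < ε') (hε0 : 0 ≤ ε) (hε : ε ≤ 1 / 8) (hεδ : ε ≤ δ)
    (hmargin : ε * (3 + δ⁻¹) ≤ ε') (hcount : 20 * ε ≤ ε' * δ ^ 2 * (ε' - ε)) :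
    (#{v ∈ V₁ | ¬ GoodVertex G ε' p V₁ V₂ V₃ v} : ℝ) ≤ ε' * #V₁ := by
  obtain ⟨⟨-, -, hreg₂₃⟩, hA₁, hA₂, hA₃⟩ := hT
  have hεε' : ε ≤ ε' := by nlinarith [inv_pos.2 hδ]
  set E := (eBtw G V₂ V₃ : ℝ)
  have hE_eq : E = dens G V₂ V₃ * (#V₂ * #V₃) := eBtw_eq_dens_mul _ _
  have hE : 0 < E := by
    have h₂₃pos : 0 < dens G V₂ V₃ := (mul_pos hδ hp).trans_le h₂₃
    obtain ⟨h₂, h₃⟩ := card_pos_of_dens_pos h₂₃pos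
    rw [hE_eq]; positivity
  set D := dens G V₁ V₂ * dens G V₁ V₃ * dens G V₂ V₃ * #V₂ * #V₃
  set f : V → ℝ := fun v => #{a ∈ nbhdIn G v V₂ ×ˢ nbhdIn G v V₃ |
    G.Adj a.1 a.2 ∧ ¬ GoodEdge G ε' V₁ V₂ V₃ a.1 a.2}
  have hsum : ∑ v ∈ V₁, f v ≤ 20 * ε * p ^ 2 * #V₁ * E :=
    sum_card_badEdges_nbhdIn_le (card_badEdges_le hreg₂₃ hA₂ hA₃ hδ hp.le h₁₂ h₁₃ h₂₃ hε0 hε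
      hεδ hmargin) hcodeg
  set S := {v ∈ V₁ | ε' * D < f v}
  have hS : #S * (ε' * D) ≤ ∑ v ∈ V₁, f v :=
    card_filter_lt_mul_le_sum V₁ f _ fun v _ => Nat.cast_nonneg _
  have hdens : δ * p * (δ * p) ≤ dens G V₁ V₂ * dens G V₁ V₃ :=
    mul_le_mul h₁₂ h₁₃ (by positivity) ((mul_pos hδ hp).le.trans h₁₂)
  have hS' : (#S : ℝ) ≤ (ε' - ε) * #V₁ := by
    have hscaled : (#S : ℝ) * (ε' * δ ^ 2) * (p ^ 2 * E) ≤
        (ε' - ε) * #V₁ * (ε' * δ ^ 2) * (p ^ 2 * E) :=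
      calc (#S : ℝ) * (ε' * δ ^ 2) * (p ^ 2 * E) = #S * ε' * ((δ * p) * (δ * p)) * E := by ring
        _ ≤ #S * ε' * (dens G V₁ V₂ * dens G V₁ V₃) * E := by gcongr
        _ = #S * (ε' * D) := by rw [hE_eq]; ring
        _ ≤ 20 * ε * p ^ 2 * #V₁ * E := hS.trans hsum
        _ ≤ ε' * δ ^ 2 * (ε' - ε) * p ^ 2 * #V₁ * E := by gcongr
        _ = (ε' - ε) * #V₁ * (ε' * δ ^ 2) * (p ^ 2 * E) := by ring
    exact le_of_mul_le_mul_right (le_of_mul_le_mul_right hscaled (by positivity)) (by positivity)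
  calc (#{v ∈ V₁ | ¬ GoodVertex G ε' p V₁ V₂ V₃ v} : ℝ)
      ≤ #{v ∈ V₁ | ¬ TypicalVertex G ε p V₁ V₂ V₃ v} + #S := by
        exact_mod_cast (card_le_card (filter_not_goodVertex_subset hεε' hp.le)).trans
          (card_union_le _ _)
    _ ≤ ε * #V₁ + (ε' - ε) * #V₁ := add_le_add hA₁ hS'
    _ = ε' * #V₁ := by ring

lemma exists_regularity_parameter {ε' δ : ℝ} (hε' : 0 < ε') (hδ : 0 < δ) :
    ∃ ε : ℝ, 0 < ε ∧ ε ≤ 1 / 8 ∧ ε ≤ δ ∧ ε * (3 + δ⁻¹) ≤ ε' ∧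
      20 * ε ≤ ε' * δ ^ 2 * (ε' - ε) := by
  let ε := min (min (1 / 8) δ) (min (ε' / (3 + δ⁻¹)) (ε' ^ 2 * δ ^ 2 / (20 + ε' * δ ^ 2)))
  have hmargin : ε ≤ ε' / (3 + δ⁻¹) := (min_le_right _ _).trans (min_le_left _ _)
  have hcount : ε ≤ ε' ^ 2 * δ ^ 2 / (20 + ε' * δ ^ 2) :=
    (min_le_right _ _).trans (min_le_right _ _)
  rw [le_div_iff₀ (by positivity)] at hmargin hcount
  exact ⟨ε, by positivity, (min_le_left _ _).trans (min_le_left _ _),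
    (min_le_left _ _).trans (min_le_right _ _), hmargin, by linear_combination hcount⟩

end RandomTriangle

open RandomTriangle

/-- **Proposition (most vertices are good).** For all positive `ε'`, `δ` there is `ε > 0` such
that in every `ε`-typical `(ε,p)`-regular triple of minimum density at least `δp`, in which
the endpoints of every edge between `V₂`,`V₃` have at most `4p²|V₁|` common neighbours in
`V₁`, at most `ε'|V₁|` vertices of `V₁` are not `ε'`-good. -/
theorem stmt_7 (ε' δ : ℝ) (hε' : 0 < ε') (hδ : 0 < δ) :
    ∃ ε : ℝ, 0 < ε ∧
      ∀ (V : Type) [Fintype V] [DecidableEq V] (G : SimpleGraph V) (p : ℝ)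
        (V₁ V₂ V₃ : Finset V), 0 < p →
        Disjoint V₁ V₂ → Disjoint V₁ V₃ → Disjoint V₂ V₃ →
        TypicalTriple G ε p V₁ V₂ V₃ →
        δ * p ≤ dens G V₁ V₂ → δ * p ≤ dens G V₁ V₃ → δ * p ≤ dens G V₂ V₃ →
        (∀ u ∈ V₂, ∀ w ∈ V₃, G.Adj u w → (codegIn G u w V₁ : ℝ) ≤ 4 * p ^ 2 * V₁.card) →
        ((V₁.filter fun v => ¬ GoodVertex G ε' p V₁ V₂ V₃ v).card : ℝ) ≤ ε' * V₁.card := by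
  obtain ⟨ε, hε0, hε, hεδ, hmargin, hcount⟩ := exists_regularity_parameter hε' hδ
  refine ⟨ε, hε0, fun V _ _ G p V₁ V₂ V₃ hp _ _ _ hT h₁₂ h₁₃ h₂₃ hcodeg => ?_⟩
  exact card_not_goodVertex_le hT hδ hp h₁₂ h₁₃ h₂₃ hcodeg hε' hε0.le hε hεδ hmargin hcount
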